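/- arXiv:1709.07078 — 3 statements merged into one kernel-verified Lean document; each statement's English description precedes it below -/
import Mathlib

section
/- With y_k = (∑_l r_l)/r_k for strictly positive rates r, the generalized fairness measure M_β(r) = sign(1−β) * (∑_k (r_k/∑_l r_l)^(1−β))^(1/β) converges as β → ∞ to −max_k { (∑_l r_l)/r_k }. -/
open Filter Real

theorem fairness_measure_tendsto_neg_max (n : ℕ) (hn : 0 < n) (r : Fin n → ℝ)
    (hr : ∀ k, 0 < r k) :
    Tendsto
      (fun β : ℝ => -((∑ k, (r k / ∑ l, r l) ^ (1 - β)) ^ (1 / β)))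
      atTop
      (nhds (-(Finset.univ.sup'
        (Finset.univ_nonempty_iff.mpr ⟨⟨0, hn⟩⟩) (fun k => (∑ l, r l) / r k)))) := by
  have he : (Finset.univ : Finset (Fin n)).Nonempty := Finset.univ_nonempty_iff.mpr ⟨⟨0, hn⟩⟩
  set S := ∑ l, r l with hS
  have hSpos : 0 < S := Finset.sum_pos (fun k _ => hr k) he
  set M := Finset.univ.sup' (Finset.univ_nonempty_iff.mpr ⟨⟨0, hn⟩⟩)
    (fun k => S / r k) with hMdef
  have hMpos : 0 < M :=
    lt_of_lt_of_le (div_pos hSpos (hr ⟨0, hn⟩))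
      (Finset.le_sup' (fun k => S / r k) (Finset.mem_univ ⟨0, hn⟩))
  apply Tendsto.neg
  -- helper: c ^ (g β) → c ^ l  when c > 0 and g → l
  have hrp : ∀ (c : ℝ), 0 < c → ∀ (g : ℝ → ℝ) (l : ℝ), Tendsto g atTop (nhds l) →
      Tendsto (fun β => c ^ g β) atTop (nhds (c ^ l)) := by
    intro c hc g l hg
    have hcont : Continuous fun t : ℝ => c ^ t := by
      have : (fun t : ℝ => c ^ t) = fun t => Real.exp (Real.log c * t) := by
        funext t; exact Real.rpow_def_of_pos hc t
      rw [this]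
      exact Real.continuous_exp.comp (continuous_const.mul continuous_id)
    exact (hcont.tendsto l).comp hg
  have hinv : Tendsto (fun β : ℝ => 1 / β) atTop (nhds 0) := by
    simpa only [one_div] using tendsto_inv_atTop_zero
  have hexp : Tendsto (fun β : ℝ => (β - 1) / β) atTop (nhds 1) := by
    have h1 : Tendsto (fun β : ℝ => 1 - 1 / β) atTop (nhds 1) := by
      simpa using tendsto_const_nhds.sub hinv
    refine h1.congr' ?_
    filter_upwards [eventually_gt_atTop (0 : ℝ)] with β hβ
    field_simp
  have hnpos : (0 : ℝ) < (n : ℝ) := by exact_mod_cast hn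
  have hlo : Tendsto (fun β : ℝ => M ^ ((β - 1) / β)) atTop (nhds M) := by
    simpa using hrp M hMpos _ 1 hexp
  have hhi : Tendsto (fun β : ℝ => (n : ℝ) ^ (1 / β) * M ^ ((β - 1) / β)) atTop (nhds M) := by
    have := (hrp (n : ℝ) hnpos _ 0 hinv).mul hlo
    simpa using this
  refine tendsto_of_tendsto_of_tendsto_of_le_of_le' hlo hhi ?_ ?_
  · -- lower bound
    filter_upwards [eventually_ge_atTop (1 : ℝ)] with β hβ
    have hβpos : 0 < β := lt_of_lt_of_le one_pos hβ
    have hterm : ∀ k : Fin n, (r k / S) ^ (1 - β) = (S / r k) ^ (β - 1) := by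
      intro k
      have hy : (0 : ℝ) ≤ S / r k := (div_pos hSpos (hr k)).le
      rw [show r k / S = (S / r k)⁻¹ from (inv_div S (r k)).symm,
        Real.inv_rpow hy, ← Real.rpow_neg hy, neg_sub]
    obtain ⟨k₀, -, hk₀⟩ := Finset.exists_mem_eq_sup' he (fun k => S / r k)
    have hsum : M ^ (β - 1) ≤ ∑ k, (r k / S) ^ (1 - β) := by
      calc M ^ (β - 1) = (r k₀ / S) ^ (1 - β) := by rw [hterm k₀, ← hk₀]
        _ ≤ ∑ k, (r k / S) ^ (1 - β) :=
          Finset.single_le_sum (fun k _ => Real.rpow_nonneg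
            (div_pos (hr k) hSpos).le _) (Finset.mem_univ k₀)
    calc M ^ ((β - 1) / β) = (M ^ (β - 1)) ^ (1 / β) := by
          rw [← Real.rpow_mul hMpos.le, mul_one_div]
      _ ≤ (∑ k, (r k / S) ^ (1 - β)) ^ (1 / β) :=
          Real.rpow_le_rpow (Real.rpow_nonneg hMpos.le _) hsum
            (by positivity)
  · -- upper bound
    filter_upwards [eventually_ge_atTop (1 : ℝ)] with β hβ
    have hβpos : 0 < β := lt_of_lt_of_le one_pos hβ
    have hterm : ∀ k : Fin n, (r k / S) ^ (1 - β) = (S / r k) ^ (β - 1) := by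
      intro k
      have hy : (0 : ℝ) ≤ S / r k := (div_pos hSpos (hr k)).le
      rw [show r k / S = (S / r k)⁻¹ from (inv_div S (r k)).symm,
        Real.inv_rpow hy, ← Real.rpow_neg hy, neg_sub]
    have hsum : ∑ k, (r k / S) ^ (1 - β) ≤ (n : ℝ) * M ^ (β - 1) := by
      have hbound : ∀ k ∈ (Finset.univ : Finset (Fin n)),
          (r k / S) ^ (1 - β) ≤ M ^ (β - 1) := by
        intro k _
        rw [hterm k]
        exact Real.rpow_le_rpow (div_pos hSpos (hr k)).le
          (Finset.le_sup' (fun k => S / r k) (Finset.mem_univ k))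
          (by linarith)
      calc ∑ k, (r k / S) ^ (1 - β) ≤ Finset.univ.card • (M ^ (β - 1)) :=
            Finset.sum_le_card_nsmul _ _ _ hbound
        _ = (n : ℝ) * M ^ (β - 1) := by
            simp [nsmul_eq_mul]
    calc (∑ k, (r k / S) ^ (1 - β)) ^ (1 / β)
        ≤ ((n : ℝ) * M ^ (β - 1)) ^ (1 / β) :=
          Real.rpow_le_rpow (Finset.sum_nonneg fun k _ =>
            Real.rpow_nonneg (div_pos (hr k) hSpos).le _) hsum (by positivity)
      _ = (n : ℝ) ^ (1 / β) * M ^ ((β - 1) / β) := by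
          rw [Real.mul_rpow hnpos.le (Real.rpow_nonneg hMpos.le _),
            ← Real.rpow_mul hMpos.le, mul_one_div]
end

section
/- A max-min fair vector on any set X ⊆ ℝ^n is unique: if r and s are both max-min fair elements of X, then r = s. -/
/-- `r` is max-min fair on `X`: `r ∈ X` and any increase of a component of `r`
(to some other feasible `s`) comes at the cost of decreasing a component
that is already no larger. -/
def MaxMinFair {n : ℕ} (X : Set (Fin n → ℝ)) (r : Fin n → ℝ) : Prop :=
  r ∈ X ∧ ∀ s ∈ X, ∀ k, r k < s k → ∃ l, r l ≤ r k ∧ s l < r l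

theorem maxMinFair_unique {n : ℕ} (X : Set (Fin n → ℝ)) (r s : Fin n → ℝ)
    (hr : MaxMinFair X r) (hs : MaxMinFair X s) : r = s := by
  have key : ∀ (r s : Fin n → ℝ), MaxMinFair X r → MaxMinFair X s →
      ∀ k, ¬ (r k < s k) := by
    intro r s hr hs k hk
    classical
    set D := Finset.univ.filter (fun j => r j < s j) with hD
    have hne : D.Nonempty := ⟨k, by simp [hD, hk]⟩
    obtain ⟨i, hiD, hmin⟩ := D.exists_min_image r hne
    have hi : r i < s i := by simpa [hD] using hiD
    obtain ⟨l, hl1, hl2⟩ := hr.2 s hs.1 i hi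
    obtain ⟨m, hm1, hm2⟩ := hs.2 r hr.1 l hl2
    have hmD : m ∈ D := by simp [hD, hm2]
    have := hmin m hmD
    have : r m < r i := lt_of_lt_of_le (lt_of_lt_of_le hm2 (hm1.trans hl2.le)) hl1
    linarith [hmin m hmD]
  funext j
  exact le_antisymm (not_lt.1 (key s r hs hr j)) (not_lt.1 (key r s hr hs j))
end

section
/- On a nonempty compact convex subset X of ℝ^n with the free disposal property, the leximin-maximal element exists: there is r ∈ X maximizing the sorted (nondecreasing) rate vector in lexicographic order, and such an r is max-min fair on X. -/
/-!
Leximin maximisers exist because a finite lexicographic order can be maximised greedily: maximise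
the first sorted coordinate over `X`, then the second over the (still compact) set of maximisers,
and so on; the sorted coordinates are continuous (indeed 1-Lipschitz for the sup norm).

If such an `r` were not max-min fair, there would be `s ∈ X` and `k` with `r k < s k` and
`r l ≤ s l` whenever `r l ≤ r k`. A point `t` close enough to `r` on the segment `[r, s]` then
raises coordinate `k` above `c := r k`, lowers none of the coordinates `≤ c`, and keeps all those
`> c` above `c`. Fewer coordinates of `t` than of `r` are `≤ c`, so `sortedVec t` beats
`sortedVec r` lexicographically.
-/

/-- The coordinates of `r` sorted in nondecreasing order. -/
noncomputable def sortedVec {n : ℕ} (r : Fin n → ℝ) : Fin n → ℝ :=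
  r ∘ Tuple.sort r

/-- Lexicographic (≤) comparison of vectors on `Fin n → ℝ`. -/
def LexLE {n : ℕ} (a b : Fin n → ℝ) : Prop :=
  a = b ∨ ∃ k : Fin n, (∀ j : Fin n, j < k → a j = b j) ∧ a k < b k

open Finset Filter Topology

section SortedVec

variable {n : ℕ}

theorem sortedVec_le_iff (v : Fin n → ℝ) (x : ℝ) (j : Fin n) :
    sortedVec v j ≤ x ↔ (j : ℕ) < #{l | v l ≤ x} := by
  unfold sortedVec
  rw [← Tuple.lt_card_le_iff_apply_le_of_monotone (Tuple.monotone_sort v)]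
  exact Iff.of_eq (congrArg _ (card_equiv (Tuple.sort v) (by simp)))

theorem sortedVec_le_of_sortedVec_le {v w : Fin n → ℝ} {x y : ℝ} {j : Fin n}
    (h : ∀ l, w l ≤ x → v l ≤ y) (hj : sortedVec w j ≤ x) : sortedVec v j ≤ y := by
  rw [sortedVec_le_iff] at hj ⊢
  exact hj.trans_le (card_le_card fun l ↦ by simpa using h l)

theorem sortedVec_le_sortedVec_add {v w : Fin n → ℝ} {d : ℝ} (h : ∀ l, v l ≤ w l + d)
    (j : Fin n) : sortedVec v j ≤ sortedVec w j + d :=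
  sortedVec_le_of_sortedVec_le (fun l hl ↦ (h l).trans (by linarith)) le_rfl

theorem lipschitzWith_sortedVec_apply (j : Fin n) :
    LipschitzWith 1 fun v : Fin n → ℝ ↦ sortedVec v j :=
  LipschitzWith.of_le_add fun v w ↦ sortedVec_le_sortedVec_add (fun l ↦ by
    linarith [le_abs_self (v l - w l), Real.dist_eq (v l) (w l) ▸ dist_le_pi_dist v w l]) j

theorem continuous_sortedVec_apply (j : Fin n) : Continuous fun v : Fin n → ℝ ↦ sortedVec v j :=
  (lipschitzWith_sortedVec_apply j).continuous

end SortedVec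

section LexLE

variable {n : ℕ}

theorem lexLE_of_apply_zero_lt {a b : Fin (n + 1) → ℝ} (h : a 0 < b 0) : LexLE a b :=
  Or.inr ⟨0, fun j hj ↦ absurd hj (Fin.not_lt_zero j), h⟩

theorem LexLE.of_tail {a b : Fin (n + 1) → ℝ} (h0 : a 0 = b 0)
    (h : LexLE (Fin.tail a) (Fin.tail b)) : LexLE a b := by
  rcases h with h | ⟨k, hk, hlt⟩
  · left
    rw [← Fin.cons_self_tail a, ← Fin.cons_self_tail b, h0, h]
  · refine Or.inr ⟨k.succ, fun j hj ↦ ?_, hlt⟩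
    cases j using Fin.cases with
    | zero => exact h0
    | succ j => exact hk j (Fin.succ_lt_succ_iff.1 hj)

theorem not_lexLE_of_le_of_lt {a b : Fin n → ℝ} {J : Fin n} (hle : ∀ j < J, a j ≤ b j)
    (hlt : a J < b J) : ¬ LexLE b a := by
  rintro (heq | ⟨k, hk, hk_lt⟩)
  · exact hlt.ne (congrFun heq J).symm
  · rcases lt_trichotomy k J with hkJ | rfl | hJk
    · exact (hle k hkJ).not_gt hk_lt
    · exact hlt.not_gt hk_lt
    · exact hlt.ne (hk J hJk).symm

theorem IsCompact.exists_forall_lexLE {α : Type*} [TopologicalSpace α] {K : Set α}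
    (hK : IsCompact K) (hne : K.Nonempty) (f : α → Fin n → ℝ)
    (hf : ∀ j, Continuous fun x ↦ f x j) : ∃ x ∈ K, ∀ y ∈ K, LexLE (f y) (f x) := by
  induction n generalizing K with
  | zero =>
    obtain ⟨x, hx⟩ := hne
    exact ⟨x, hx, fun _ _ ↦ Or.inl (Subsingleton.elim _ _)⟩
  | succ n ih =>
    obtain ⟨x₀, hx₀, hmax⟩ := hK.exists_isMaxOn hne (hf 0).continuousOn
    obtain ⟨x, ⟨hxK, hx₀x : f x₀ 0 ≤ f x 0⟩, hx⟩ :=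
      ih (hK.inter_right (isClosed_le continuous_const (hf 0))) ⟨x₀, hx₀, le_refl (f x₀ 0)⟩
        (fun x ↦ Fin.tail (f x)) (fun j ↦ hf j.succ)
    refine ⟨x, hxK, fun y hy ↦ ?_⟩
    rcases ((hmax hy).trans hx₀x).lt_or_eq with hlt | heq
    · exact lexLE_of_apply_zero_lt hlt
    · exact (hx y ⟨hy, hx₀x.trans_eq heq.symm⟩).of_tail heq

end LexLE

section MaxMinFair

variable {n : ℕ}

theorem not_lexLE_sortedVec_of_raise {r u : Fin n → ℝ} {c : ℝ}
    (hle : ∀ l, r l ≤ c → r l ≤ u l) (hgt : ∀ l, c < r l → c < u l) {k : Fin n}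
    (hk : r k ≤ c) (huk : c < u k) : ¬ LexLE (sortedVec u) (sortedVec r) := by
  have hsub : ({l | u l ≤ c} : Finset (Fin n)) ⊂ ({l | r l ≤ c} : Finset (Fin n)) := by
    refine Finset.ssubset_iff_subset_ne.2 ⟨fun l ↦ ?_, fun heq ↦ ?_⟩
    · simpa using fun hul ↦ le_of_not_gt fun hrl ↦ (hgt l hrl).not_ge hul
    · simpa [huk.not_ge, hk] using congrArg (k ∈ ·) heq
  have hcard := card_lt_card hsub
  let J : Fin n :=
    ⟨#{l | u l ≤ c}, hcard.trans_le (card_le_univ _ |>.trans_eq (Fintype.card_fin n))⟩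
  have hrJ : sortedVec r J ≤ c := (sortedVec_le_iff r c J).2 hcard
  have huJ : c < sortedVec u J := lt_of_not_ge fun h ↦ ((sortedVec_le_iff u c J).1 h).false
  refine not_lexLE_of_le_of_lt (fun j hj ↦ le_of_not_gt fun hlt ↦ ?_) (hrJ.trans_lt huJ)
  have hrj : sortedVec r j ≤ c := (Tuple.monotone_sort r hj.le).trans hrJ
  refine hlt.not_ge (sortedVec_le_of_sortedVec_le (w := u) (fun l hl ↦ ?_) le_rfl)
  by_cases hrl : c < r l
  · exact absurd ((hgt l hrl).trans_le (hl.trans hlt.le)) hrj.not_gt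
  · exact (hle l (le_of_not_gt hrl)).trans hl

theorem exists_forall_lt_convexComb {ι : Type*} [Finite ι] (r s : ι → ℝ) (c : ℝ) :
    ∃ ε ∈ Set.Ioo (0 : ℝ) 1, ∀ l, c < r l → c < ((1 - ε) • r + ε • s) l := by
  have hcont : Continuous fun ε : ℝ ↦ (1 - ε) • r + ε • s := by fun_prop
  have hnear : ∀ᶠ ε in 𝓝 (0 : ℝ), ∀ l, c < r l → c < ((1 - ε) • r + ε • s) l := by
    refine eventually_all.2 fun l ↦ ?_
    by_cases hl : c < r l
    · have hlim := ((continuous_apply l).tendsto _).comp (hcont.tendsto 0)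
      simp only [Function.comp_def, sub_zero, one_smul, zero_smul, add_zero] at hlim
      exact (hlim.eventually (lt_mem_nhds hl)).mono fun _ h _ ↦ h
    · exact Eventually.of_forall fun _ h ↦ absurd h hl
  exact ((hnear.filter_mono nhdsWithin_le_nhds).and (Ioo_mem_nhdsGT one_pos)).exists.imp
    fun ε h ↦ ⟨h.2, h.1⟩

theorem maxMinFair_of_forall_lexLE {X : Set (Fin n → ℝ)} (hconv : Convex ℝ X) {r : Fin n → ℝ}
    (hr : r ∈ X) (hmax : ∀ s ∈ X, LexLE (sortedVec s) (sortedVec r)) : MaxMinFair X r := by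
  refine ⟨hr, fun s hs k hk ↦ ?_⟩
  by_contra! hlow
  obtain ⟨ε, ⟨hε₀, hε₁⟩, hhigh⟩ := exists_forall_lt_convexComb r s (r k)
  have ht : ∀ l, ((1 - ε) • r + ε • s) l = r l + ε * (s l - r l) := fun l ↦ by
    simp only [Pi.add_apply, Pi.smul_apply, smul_eq_mul]; ring
  refine not_lexLE_sortedVec_of_raise (fun l hl ↦ ?_) hhigh le_rfl ?_
    (hmax _ (hconv hr hs (by linarith) hε₀.le (by ring)))
  · rw [ht]
    exact le_add_of_nonneg_right (mul_nonneg hε₀.le (sub_nonneg.2 (hlow l hl)))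
  · rw [ht]
    exact lt_add_of_pos_right _ (mul_pos hε₀ (sub_pos.2 hk))

end MaxMinFair

theorem leximin_max_exists_and_maxMinFair_general {n : ℕ} (X : Set (Fin n → ℝ))
    (hne : X.Nonempty) (hcomp : IsCompact X) (hconv : Convex ℝ X) :
    ∃ r ∈ X, (∀ s ∈ X, LexLE (sortedVec s) (sortedVec r)) ∧ MaxMinFair X r := by
  obtain ⟨r, hr, hmax⟩ := hcomp.exists_forall_lexLE hne sortedVec continuous_sortedVec_apply
  exact ⟨r, hr, hmax, maxMinFair_of_forall_lexLE hconv hr hmax⟩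

theorem leximin_max_exists_and_maxMinFair {n : ℕ} (X : Set (Fin n → ℝ))
    (hne : X.Nonempty) (hcomp : IsCompact X) (hconv : Convex ℝ X)
    (hnonneg : ∀ r ∈ X, ∀ k, 0 ≤ r k)
    (hfd : ∀ s ∈ X, ∀ s' : Fin n → ℝ, (∀ k, 0 ≤ s' k) → (∀ k, s' k ≤ s k) → s' ∈ X) :
    ∃ r ∈ X, (∀ s ∈ X, LexLE (sortedVec s) (sortedVec r)) ∧ MaxMinFair X r :=
  leximin_max_exists_and_maxMinFair_general X hne hcomp hconv
end
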